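/- arXiv:2102.12457 — 3 statements merged into one kernel-verified Lean document; each statement's English description precedes it below -/
import Mathlib

section
/- Let (A_n) be a sequence of operators on Banach spaces X_n with μ ∈ ρ(A_n) for all n and sup_n ‖R(μ, A_n)‖ ≤ K, and let E_n : X_n → X, P_n : X → X_n be bounded operators with sup_n ‖E_n‖ < ∞ and sup_n ‖P_n‖ < ∞. If E_n R(μ, A_n) P_n x converges for every x ∈ X, then for every λ with |μ − λ| < 1/K, the sequence E_n R(λ, A_n) P_n x converges for every x ∈ X (where λ ∈ ρ(A_n) for all n), and the convergence is uniform in λ on each disc |μ − λ| ≤ α/K, 0 < α < 1. -/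
/-!
Write `Tₙ = Eₙ Rₙ Pₙ`. Since `Pₙ Eₙ = 1`, the powers telescope: `Tₙ^(k+1) = Eₙ Rₙ^(k+1) Pₙ`.
The `Tₙ` are uniformly bounded and converge strongly to some `S`, so `Tₙ^(k+1) x → S^(k+1) x`
for every `k`, while `‖Eₙ Rₙ^(k+1) Pₙ x‖ ≤ M_E K^(k+1) M_P ‖x‖` uniformly in `n`. On a disc
`‖μ - λ‖ ≤ ρ < 1/K` the Neumann series `∑ₖ (μ - λ)^k Eₙ Rₙ^(k+1) Pₙ x` is therefore dominated,
independently of `λ`, by the summable sequence `ρ^k M_E K^(k+1) M_P ‖x‖`, and dominated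
convergence for series yields convergence to `∑ₖ (μ - λ)^k S^(k+1) x`, uniformly in `λ`.
-/

open Filter Topology

section Operators

variable {ι 𝕜 X Y : Type*} [NontriviallyNormedField 𝕜]
  [NormedAddCommGroup X] [NormedSpace 𝕜 X] [NormedAddCommGroup Y] [NormedSpace 𝕜 Y]

theorem tendsto_apply_of_tendsto_apply_of_norm_le {l : Filter ι} {A : ι → X →L[𝕜] Y}
    {f : X → Y} {M : ℝ} (hA : ∀ i, ‖A i‖ ≤ M) (hAf : ∀ x, Tendsto (fun i => A i x) l (𝓝 (f x)))
    {x : ι → X} {x₀ : X} (hx : Tendsto x l (𝓝 x₀)) :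
    Tendsto (fun i => A i (x i)) l (𝓝 (f x₀)) := by
  have hsmall : Tendsto (fun i => A i (x i - x₀)) l (𝓝 0) := by
    refine squeeze_zero_norm (fun i => (A i).le_of_opNorm_le (hA i) _) ?_
    simpa using (tendsto_iff_norm_sub_tendsto_zero.mp hx).const_mul M
  simpa using hsmall.add (hAf x₀)

theorem tendsto_pow_apply_of_tendsto_apply {l : Filter ι} {T : ι → X →L[𝕜] X} {S : X → X}
    {M : ℝ} (hT : ∀ i, ‖T i‖ ≤ M) (hS : ∀ x, Tendsto (fun i => T i x) l (𝓝 (S x)))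
    (k : ℕ) (x : X) :
    Tendsto (fun i => (T i ^ k) x) l (𝓝 (S^[k] x)) := by
  induction k with
  | zero => simpa using tendsto_const_nhds
  | succ k ih =>
    simpa only [pow_succ', mul_apply_eq_comp, Function.iterate_succ_apply'] using
      tendsto_apply_of_tendsto_apply_of_norm_le hT hS ih

theorem ContinuousLinearMap.norm_comp_comp_le {E : Y →L[𝕜] X} {R : Y →L[𝕜] Y}
    {P : X →L[𝕜] Y} {a b c : ℝ} (hE : ‖E‖ ≤ a) (hR : ‖R‖ ≤ c) (hP : ‖P‖ ≤ b) :
    ‖E.comp (R.comp P)‖ ≤ a * (c * b) := by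
  refine (opNorm_comp_le _ _).trans (mul_le_mul hE ?_ (norm_nonneg _) ((norm_nonneg _).trans hE))
  exact (opNorm_comp_le _ _).trans (mul_le_mul hR hP (norm_nonneg _) ((norm_nonneg _).trans hR))

theorem ContinuousLinearMap.comp_comp_pow_succ {E : Y →L[𝕜] X} {P : X →L[𝕜] Y}
    (hPE : P.comp E = .id 𝕜 Y) (R : Y →L[𝕜] Y) (k : ℕ) :
    E.comp (R.comp P) ^ (k + 1) = E.comp ((R ^ (k + 1)).comp P) := by
  induction k with
  | zero => simp
  | succ k ih =>
    rw [pow_succ, ih, pow_succ _ (k + 1)]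
    ext x
    have hPE' (y : Y) : P (E y) = y := congr($hPE y)
    simp [hPE']

theorem summable_pow_smul_pow_succ {A : Type*} [NormedRing A] [NormedAlgebra 𝕜 A]
    [CompleteSpace A] {c : 𝕜} {a : A} (h : ‖c‖ * ‖a‖ < 1) :
    Summable fun k : ℕ => c ^ k • a ^ (k + 1) := by
  have hgeom := summable_geometric_of_norm_lt_one ((norm_smul_le c a).trans_lt h)
  simpa [smul_pow, pow_succ, smul_mul_assoc] using hgeom.mul_right a

theorem ContinuousLinearMap.map_tsum_pow_smul_pow_succ_apply [CompleteSpace Y]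
    (E : Y →L[𝕜] X) {R : Y →L[𝕜] Y} {c : 𝕜} (h : ‖c‖ * ‖R‖ < 1) (y : Y) :
    E ((∑' k : ℕ, c ^ k • R ^ (k + 1)) y) = ∑' k : ℕ, c ^ k • E ((R ^ (k + 1)) y) := by
  refine ((E.comp (apply 𝕜 Y y)).map_tsum (summable_pow_smul_pow_succ h)).trans ?_
  simp only [coe_comp, Function.comp_apply, apply_apply, map_smul]

end Operators

section PowerSeries

variable {ι 𝕜 X : Type*} [NormedField 𝕜] [NormedAddCommGroup X] [NormedSpace 𝕜 X]

theorem norm_tsum_pow_smul_le {z : 𝕜} {w : ℕ → X} {ρ : ℝ} (hz : ‖z‖ ≤ ρ)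
    (hw : Summable fun k => ρ ^ k * ‖w k‖) :
    ‖∑' k, z ^ k • w k‖ ≤ ∑' k, ρ ^ k * ‖w k‖ :=
  tsum_of_norm_bounded hw.hasSum fun k => by
    rw [norm_smul, norm_pow]
    gcongr

theorem tendstoUniformlyOn_tsum_pow_smul [CompleteSpace X] {l : Filter ι} [l.NeBot]
    {u : ι → ℕ → X} {v : ℕ → X} {b : ℕ → ℝ} {ρ : ℝ} (hρ : 0 ≤ ρ)
    (hu : ∀ k, Tendsto (u · k) l (𝓝 (v k))) (hub : ∀ i k, ‖u i k‖ ≤ b k)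
    (hb : Summable fun k => ρ ^ k * b k) :
    TendstoUniformlyOn (fun i (z : 𝕜) => ∑' k, z ^ k • u i k)
      (fun z : 𝕜 => ∑' k, z ^ k • v k) l {z | ‖z‖ ≤ ρ} := by
  have hvb (k : ℕ) : ‖v k‖ ≤ b k := le_of_tendsto' (hu k).norm (hub · k)
  have hdiff_le (i : ι) (k : ℕ) : ρ ^ k * ‖v k - u i k‖ ≤ 2 * (ρ ^ k * b k) :=
    calc ρ ^ k * ‖v k - u i k‖ ≤ ρ ^ k * (b k + b k) := by
          gcongr
          exact (norm_sub_le _ _).trans (add_le_add (hvb k) (hub i k))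
      _ = 2 * (ρ ^ k * b k) := by ring
  have hdiff_summable (i : ι) : Summable fun k => ρ ^ k * ‖v k - u i k‖ :=
    (hb.mul_left 2).of_nonneg_of_le (fun k => by positivity) (hdiff_le i)
  have herr : Tendsto (fun i => ∑' k, ρ ^ k * ‖v k - u i k‖) l (𝓝 0) := by
    have hterm (k : ℕ) : Tendsto (fun i => ρ ^ k * ‖v k - u i k‖) l (𝓝 0) := by
      simpa using ((hu k).const_sub (v k)).norm.const_mul (ρ ^ k)
    simpa using tendsto_tsum_of_dominated_convergence (hb.mul_left 2) hterm
      (.of_forall fun i k => by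
        rw [Real.norm_of_nonneg (by positivity)]
        exact hdiff_le i k)
  rw [Metric.tendstoUniformlyOn_iff]
  intro ε hε
  filter_upwards [herr.eventually (gt_mem_nhds hε)] with i hi z hz
  have hsummable {w : ℕ → X} (hw : ∀ k, ‖w k‖ ≤ b k) : Summable fun k => z ^ k • w k :=
    hb.of_norm_bounded fun k => by
      rw [norm_smul, norm_pow]
      exact mul_le_mul (pow_le_pow_left₀ (norm_nonneg z) hz k) (hw k) (norm_nonneg _)
        (pow_nonneg hρ k)
  calc dist (∑' k, z ^ k • v k) (∑' k, z ^ k • u i k)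
      = ‖∑' k, z ^ k • (v k - u i k)‖ := by
        rw [dist_eq_norm, ← (hsummable hvb).tsum_sub (hsummable (hub i))]
        simp only [smul_sub]
    _ ≤ ∑' k, ρ ^ k * ‖v k - u i k‖ := norm_tsum_pow_smul_le hz (hdiff_summable i)
    _ < ε := hi

end PowerSeries

/-- If `sup_n ‖R(μ,A_n)‖ ≤ K`, the operators `E_n, P_n` are uniformly
bounded with `P_n E_n = Id`, and `E_n R(μ,A_n) P_n x` converges for every `x`, then for
every `λ` with `|μ−λ| < 1/K` the sequence `E_n R(λ,A_n) P_n x` (with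
`R(λ,A_n) = Σ_k (μ−λ)^k R(μ,A_n)^{k+1}`) converges for every `x`, uniformly in `λ` on
each disc `|μ−λ| ≤ α/K`, `0 < α < 1`. -/
theorem resolvent_strong_convergence_propagates
    {X : Type*} [NormedAddCommGroup X] [NormedSpace ℂ X] [CompleteSpace X]
    {Xn : ℕ → Type*} [∀ n, NormedAddCommGroup (Xn n)] [∀ n, NormedSpace ℂ (Xn n)]
    [∀ n, CompleteSpace (Xn n)]
    (Rn : ∀ n, Xn n →L[ℂ] Xn n) (mu : ℂ) (K : ℝ) (hK : 0 < K)
    (hRn : ∀ n, ‖Rn n‖ ≤ K)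
    (E : ∀ n, Xn n →L[ℂ] X) (P : ∀ n, X →L[ℂ] Xn n)
    (ME MP : ℝ) (hE : ∀ n, ‖E n‖ ≤ ME) (hP : ∀ n, ‖P n‖ ≤ MP)
    (hPE : ∀ n, (P n).comp (E n) = ContinuousLinearMap.id ℂ (Xn n))
    (hconv : ∀ x : X, ∃ y : X,
      Tendsto (fun n => E n (Rn n (P n x))) atTop (nhds y))
    (x : X) :
    ∃ f : ℂ → X,
      (∀ lam : ℂ, ‖mu - lam‖ < 1 / K →
        Tendsto
          (fun n => E n ((∑' k : ℕ, (mu - lam) ^ k • (Rn n) ^ (k + 1)) (P n x)))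
          atTop (nhds (f lam))) ∧
      (∀ α : ℝ, 0 < α → α < 1 →
        TendstoUniformlyOn
          (fun (n : ℕ) (lam : ℂ) =>
            E n ((∑' k : ℕ, (mu - lam) ^ k • (Rn n) ^ (k + 1)) (P n x)))
          f atTop {lam : ℂ | ‖mu - lam‖ ≤ α / K}) := by
  choose S hS using hconv
  set u : ℕ → ℕ → X := fun n k => E n ((Rn n ^ (k + 1)) (P n x))
  have hu (k : ℕ) : Tendsto (u · k) atTop (𝓝 (S^[k + 1] x)) := by
    have hT (n : ℕ) := ContinuousLinearMap.norm_comp_comp_le (hE n) (hRn n) (hP n)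
    refine (tendsto_pow_apply_of_tendsto_apply hT hS (k + 1) x).congr fun n => ?_
    rw [ContinuousLinearMap.comp_comp_pow_succ (hPE n)]
    rfl
  have hub (n k : ℕ) : ‖u n k‖ ≤ ME * (K ^ (k + 1) * MP) * ‖x‖ := by
    refine ContinuousLinearMap.le_of_opNorm_le ((E n).comp ((Rn n ^ (k + 1)).comp (P n)))
      (ContinuousLinearMap.norm_comp_comp_le (hE n) ?_ (hP n)) x
    exact (norm_pow_le' _ k.succ_pos).trans (pow_le_pow_left₀ (norm_nonneg _) (hRn n) _)
  have huniform (ρ : ℝ) (hρ0 : 0 ≤ ρ) (hρ : ρ < 1 / K) :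
      TendstoUniformlyOn
        (fun (n : ℕ) (lam : ℂ) => E n ((∑' k : ℕ, (mu - lam) ^ k • (Rn n) ^ (k + 1)) (P n x)))
        (fun lam => ∑' k, (mu - lam) ^ k • S^[k + 1] x) atTop {lam | ‖mu - lam‖ ≤ ρ} := by
    have hρK : ρ * K < 1 := (lt_div_iff₀ hK).mp hρ
    have hb : Summable fun k => ρ ^ k * (ME * (K ^ (k + 1) * MP) * ‖x‖) := by
      refine ((summable_geometric_of_lt_one (by positivity) hρK).mul_left
        (ME * K * MP * ‖x‖)).congr fun k => ?_
      ring
    refine ((tendstoUniformlyOn_tsum_pow_smul hρ0 hu hub hb).comp (mu - ·)).congr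
      (.of_forall fun n lam hlam => ((E n).map_tsum_pow_smul_pow_succ_apply ?_ _).symm)
    exact (mul_le_mul hlam (hRn n) (norm_nonneg _) hρ0).trans_lt hρK
  exact ⟨_, fun lam hlam => (huniform _ (norm_nonneg _) hlam).tendsto_at (le_refl ‖mu - lam‖),
    fun α hα0 hα1 => huniform _ (by positivity) (div_lt_div_of_pos_right hα1 hK)⟩
end

section
/- Let A_n ∈ G(M, ω, X_n) for all n (each A_n generates a C₀-semigroup T_n with ‖T_n(t)‖ ≤ M e^{ωt}), let E_n : X_n → X and P_n : X → X_n be uniformly bounded with P_n E_n = Id_{X_n}, and suppose for every λ with Re λ > ω and every x ∈ X the limit R(λ)x := lim_n E_n R(λ, A_n) P_n x exists. Then the family {R(λ) : Re λ > ω} is a pseudoresolvent: R(λ) − R(μ) = (λ − μ) R(λ) R(μ) for all λ, μ with real part greater than ω. -/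
open Filter

/-- If `A_n ∈ G(M, ω, X_n)` (so their resolvents satisfy the resolvent
identity and the Hille–Yosida estimates on `Re λ > ω`), `E_n, P_n` are uniformly bounded
with `P_n E_n = Id`, and `R(λ)x = lim_n E_n R(λ,A_n) P_n x` exists for every `x` and
every `Re λ > ω`, then `{R(λ) : Re λ > ω}` is a pseudoresolvent:
`R(λ) − R(μ) = (λ−μ) R(λ) R(μ)`. -/
theorem limit_is_pseudoresolvent
    {X : Type*} [NormedAddCommGroup X] [NormedSpace ℂ X] [CompleteSpace X]
    {Xn : ℕ → Type*} [∀ n, NormedAddCommGroup (Xn n)] [∀ n, NormedSpace ℂ (Xn n)]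
    [∀ n, CompleteSpace (Xn n)]
    (M ω : ℝ) (hM : 1 ≤ M)
    (Rn : ∀ n, ℂ → (Xn n →L[ℂ] Xn n))
    (hres : ∀ n, ∀ lam mu : ℂ, ω < lam.re → ω < mu.re →
      Rn n lam - Rn n mu = (lam - mu) • ((Rn n lam).comp (Rn n mu)))
    (hHY : ∀ n, ∀ lam : ℂ, ω < lam.re → ∀ k : ℕ, 1 ≤ k →
      ‖(Rn n lam) ^ k‖ ≤ M / (lam.re - ω) ^ k)
    (E : ∀ n, Xn n →L[ℂ] X) (P : ∀ n, X →L[ℂ] Xn n)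
    (ME MP : ℝ) (hE : ∀ n, ‖E n‖ ≤ ME) (hP : ∀ n, ‖P n‖ ≤ MP)
    (hPE : ∀ n, (P n).comp (E n) = ContinuousLinearMap.id ℂ (Xn n))
    (R : ℂ → X → X)
    (hconv : ∀ lam : ℂ, ω < lam.re → ∀ x : X,
      Tendsto (fun n => E n (Rn n lam (P n x))) atTop (nhds (R lam x))) :
    ∀ lam mu : ℂ, ω < lam.re → ω < mu.re → ∀ x : X,
      R lam x - R mu x = (lam - mu) • R lam (R mu x) := by
  intro lam mu hlam hmu x
  have hMEnn : (0:ℝ) ≤ ME := le_trans (norm_nonneg _) (hE 0)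
  have hMPnn : (0:ℝ) ≤ MP := le_trans (norm_nonneg _) (hP 0)
  have hbound : ∀ n (z : X), ‖E n (Rn n lam (P n z))‖ ≤ ME * (M / (lam.re - ω)) * MP * ‖z‖ := by
    intro n z
    have h1 : ‖Rn n lam‖ ≤ M / (lam.re - ω) := by simpa using hHY n lam hlam 1 le_rfl
    calc ‖E n (Rn n lam (P n z))‖ ≤ ME * ‖Rn n lam (P n z)‖ := by
          refine le_trans ((E n).le_opNorm _) ?_
          exact mul_le_mul_of_nonneg_right (hE n) (norm_nonneg _)
      _ ≤ ME * ((M / (lam.re - ω)) * ‖P n z‖) := by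
          refine mul_le_mul_of_nonneg_left ?_ hMEnn
          refine le_trans ((Rn n lam).le_opNorm _) ?_
          exact mul_le_mul_of_nonneg_right h1 (norm_nonneg _)
      _ ≤ ME * ((M / (lam.re - ω)) * (MP * ‖z‖)) := by
          refine mul_le_mul_of_nonneg_left ?_ hMEnn
          refine mul_le_mul_of_nonneg_left ?_ ?_
          · exact le_trans ((P n).le_opNorm _) (mul_le_mul_of_nonneg_right (hP n) (norm_nonneg _))
          · exact div_nonneg (by linarith) (le_of_lt (sub_pos.mpr hlam))
      _ = ME * (M / (lam.re - ω)) * MP * ‖z‖ := by ring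
  -- the difference sequence
  have t1 : Tendsto (fun n => E n (Rn n lam (P n x)) - E n (Rn n mu (P n x))) atTop
      (nhds (R lam x - R mu x)) := (hconv lam hlam x).sub (hconv mu hmu x)
  -- rewrite the sequence using the resolvent identity and P∘E = id
  have heq : ∀ n, E n (Rn n lam (P n x)) - E n (Rn n mu (P n x))
      = (lam - mu) • E n (Rn n lam (P n (E n (Rn n mu (P n x))))) := by
    intro n
    have h1 : Rn n lam (P n x) - Rn n mu (P n x)
        = (lam - mu) • (Rn n lam (Rn n mu (P n x))) := by
      have := congrArg (fun (T : Xn n →L[ℂ] Xn n) => T (P n x)) (hres n lam mu hlam hmu)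
      simpa using this
    have h2 : P n (E n (Rn n mu (P n x))) = Rn n mu (P n x) := by
      have := congrArg (fun (T : Xn n →L[ℂ] Xn n) => T (Rn n mu (P n x))) (hPE n)
      simpa using this
    rw [h2, ← map_sub, h1, map_smul]
  -- the key convergence: E Rn(lam) P applied to y_n converges to R lam (R mu x)
  have hd0 : Tendsto (fun n => E n (Rn n lam (P n (E n (Rn n mu (P n x)) - R mu x))))
      atTop (nhds 0) := by
    have hy : Tendsto (fun n => ‖E n (Rn n mu (P n x)) - R mu x‖) atTop (nhds 0) :=
      (tendsto_iff_norm_sub_tendsto_zero.mp (hconv mu hmu x))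
    refine squeeze_zero_norm (fun n => hbound n _) ?_
    have := hy.const_mul (ME * (M / (lam.re - ω)) * MP)
    simpa using this
  have t2 : Tendsto (fun n => E n (Rn n lam (P n (E n (Rn n mu (P n x)))))) atTop
      (nhds (R lam (R mu x))) := by
    have hb : Tendsto (fun n => E n (Rn n lam (P n (R mu x)))) atTop
        (nhds (R lam (R mu x))) := hconv lam hlam _
    have := hd0.add hb
    simp only [zero_add] at this
    refine this.congr fun n => ?_
    simp only [map_sub, sub_add_cancel]
  have t2' : Tendsto (fun n => E n (Rn n lam (P n x)) - E n (Rn n mu (P n x))) atTop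
      (nhds ((lam - mu) • R lam (R mu x))) := by
    refine (t2.const_smul (lam - mu)).congr fun n => (heq n).symm
  exact tendsto_nhds_unique t1 t2'
end

section
/- For a finite directed graph G with all velocities equal to 1 and B its transposed line-graph adjacency matrix, the family defined by (T(t)f)(s) := B^k f(s + t − k), where k ∈ ℕ₀ is chosen so that k ≤ t + s < k + 1, is a C₀-semigroup on L¹([0,1], ℂ^{|E(G)|}): it satisfies T(0) = Id, T(t)T(r) = T(t+r) for t, r ≥ 0, and T(t)f → f in L¹ as t ↓ 0. -/
/-
`T(t)f(s)` depends only on `s + t`: on `[0, 2)` it is the profile `Φ = flowProfile B f`, equal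
to `f` on `[0, 1)` and to `B f(· - 1)` on `[1, 2)`. Hence for `0 < t < 1` the `L¹` distance
between `T(t)f` and `f` is at most `m ∫ ‖Φ(x + t) - Φ(x)‖ dx`, which tends to `0` by continuity
of translation in `L¹(ℝ)`.
The semigroup law is the floor identity `⌊x - k⌋₊ = ⌊x⌋₊ - k` for natural `k`.
-/

open Filter MeasureTheory

/-- The flow `(T(t)f)(s) = B^k f(s+t-k)` with `k = ⌊t+s⌋`. -/
noncomputable def flowMap {m : ℕ} (B : Matrix (Fin m) (Fin m) ℂ) (t : ℝ)
    (f : ℝ → Fin m → ℂ) : ℝ → Fin m → ℂ :=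
  fun s => (B ^ Nat.floor (t + s)).mulVec (f (s + t - Nat.floor (t + s)))

open Set Topology

theorem tendsto_integral_norm_comp_add_sub {G E : Type*} [AddGroup G] [TopologicalSpace G]
    [IsTopologicalAddGroup G] [MeasurableSpace G] [BorelSpace G]
    {μ : Measure G} [μ.IsAddRightInvariant] [IsLocallyFiniteMeasure μ]
    [μ.InnerRegularCompactLTTop] [NormedAddCommGroup E] {g : G → E} (hg : Integrable g μ) :
    Tendsto (fun t => ∫ x, ‖g (x + t) - g x‖ ∂μ) (𝓝 0) (𝓝 0) := by
  have hmp : ∀ t : G, MeasurePreserving (ContinuousMap.addRight t) μ μ :=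
    fun t => measurePreserving_add_right μ t
  have hcont : Continuous fun t : G => ContinuousMap.addRight t :=
    ContinuousMap.continuous_of_continuous_uncurry _ (continuous_snd.add continuous_fst)
  have htend := (tendsto_const_nhds (x := hg.toL1 g) (f := 𝓝 (0 : G))).compMeasurePreservingLp
    (hcont.tendsto 0) hmp (hmp 0) ENNReal.one_ne_top
  have h0 : Lp.compMeasurePreserving (ContinuousMap.addRight (0 : G)) (hmp 0) (hg.toL1 g)
      = hg.toL1 g := by
    ext1; exact (Lp.coeFn_compMeasurePreserving _ _).trans (by simp [Function.comp_def])
  rw [h0, tendsto_iff_norm_sub_tendsto_zero] at htend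
  refine htend.congr fun t => ?_
  rw [L1.norm_eq_integral_norm]
  refine integral_congr_ae ?_
  have hcomp := (hmp t).quasiMeasurePreserving.ae_eq_comp hg.coeFn_toL1
  filter_upwards [Lp.coeFn_sub (Lp.compMeasurePreserving _ (hmp t) (hg.toL1 g)) (hg.toL1 g),
    Lp.coeFn_compMeasurePreserving (hg.toL1 g) (hmp t), hg.coeFn_toL1, hcomp] with x h1 h2 h3 h4
  rw [h1, Pi.sub_apply, h2, h3, h4]
  rfl

section

variable {m : ℕ} (B : Matrix (Fin m) (Fin m) ℂ) (f : ℝ → Fin m → ℂ)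

theorem flowMap_zero_apply {s : ℝ} (hs : s ∈ Ico (0 : ℝ) 1) : flowMap B 0 f s = f s := by
  simp [flowMap, Nat.floor_eq_zero.mpr hs.2]

theorem flowMap_flowMap {r : ℝ} (hr : 0 ≤ r) (t s : ℝ) :
    flowMap B t (flowMap B r f) s = flowMap B (t + r) f s := by
  set k := ⌊t + s⌋₊
  set K := ⌊t + r + s⌋₊
  have hkK : k ≤ K := Nat.floor_le_floor (by linarith)
  have hfloor : ⌊r + (s + t - k)⌋₊ = K - k := by
    rw [← Nat.floor_sub_natCast]; congr 1; ring
  dsimp only [flowMap]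
  rw [hfloor, Matrix.mulVec_mulVec, ← pow_add, Nat.add_sub_cancel' hkK, Nat.cast_sub hkK]
  congr 2
  ring

noncomputable def flowProfile (x : ℝ) : Fin m → ℂ :=
  (Ico 0 1).indicator f x + B.mulVec ((Ico 0 1).indicator f (x - 1))

theorem flowMap_eq_flowProfile {t s : ℝ} (ht : 0 ≤ t) (hs : 0 ≤ s) (hts : t + s < 2) :
    flowMap B t f s = flowProfile B f (s + t) := by
  rcases lt_or_ge (t + s) 1 with h | h
  · have hfloor : ⌊t + s⌋₊ = 0 := Nat.floor_eq_zero.mpr h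
    simp [flowMap, flowProfile, hfloor, indicator_of_mem (show s + t ∈ Ico (0 : ℝ) 1 from
      ⟨by linarith, by linarith⟩), indicator_of_notMem (show s + t - 1 ∉ Ico (0 : ℝ) 1 from
      fun h' => by linarith [h'.1])]
  · have hfloor : ⌊t + s⌋₊ = 1 := Nat.floor_eq_iff (by linarith) |>.mpr ⟨by simpa, by
      norm_num; linarith⟩
    simp [flowMap, flowProfile, hfloor, indicator_of_notMem (show s + t ∉ Ico (0 : ℝ) 1 from
      fun h' => by linarith [h'.2]), indicator_of_mem (show s + t - 1 ∈ Ico (0 : ℝ) 1 from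
      ⟨by linarith, by linarith⟩)]

theorem integrable_flowProfile (hf : IntegrableOn f (Ico 0 1)) :
    Integrable (flowProfile B f) := by
  have hind : Integrable ((Ico 0 1).indicator f) := hf.integrable_indicator measurableSet_Ico
  have hshift : Integrable fun x => B.mulVec ((Ico 0 1).indicator f (x - 1)) :=
    (Matrix.toLin' B).toContinuousLinearMap.integrable_comp (hind.comp_sub_right 1)
  exact hind.add hshift

theorem integral_flowMap_sub_le (hf : IntegrableOn f (Ico 0 1)) {t : ℝ}
    (ht : t ∈ Ioo (0 : ℝ) 1) :
    ∫ s in Ico (0 : ℝ) 1, ∑ i, ‖flowMap B t f s i - f s i‖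
      ≤ m * ∫ x, ‖flowProfile B f (x + t) - flowProfile B f x‖ := by
  set Φ := flowProfile B f
  have hpoint : ∀ s ∈ Ico (0 : ℝ) 1,
      ∑ i, ‖flowMap B t f s i - f s i‖ ≤ m * ‖Φ (s + t) - Φ s‖ := by
    intro s hs
    have hfs : f s = Φ s := by
      rw [← flowMap_zero_apply B f hs,
        flowMap_eq_flowProfile B f le_rfl hs.1 (by linarith [hs.2]), add_zero]
    rw [flowMap_eq_flowProfile B f ht.1.le hs.1 (by linarith [ht.2, hs.2]), hfs]
    simpa using Pi.sum_norm_apply_le_norm (Φ (s + t) - Φ s)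
  have hΦ : Integrable Φ := integrable_flowProfile B f hf
  have hint : Integrable fun x => (m : ℝ) * ‖Φ (x + t) - Φ x‖ :=
    ((hΦ.comp_add_right t).sub hΦ).norm.const_mul _
  calc ∫ s in Ico (0 : ℝ) 1, ∑ i, ‖flowMap B t f s i - f s i‖
      ≤ ∫ s in Ico (0 : ℝ) 1, (m : ℝ) * ‖Φ (s + t) - Φ s‖ :=
        integral_mono_of_nonneg (.of_forall fun s => by positivity) hint.integrableOn
          ((ae_restrict_iff' measurableSet_Ico).2 (.of_forall hpoint))
    _ ≤ ∫ x, (m : ℝ) * ‖Φ (x + t) - Φ x‖ :=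
        setIntegral_le_integral hint (.of_forall fun x => by positivity)
    _ = m * ∫ x, ‖Φ (x + t) - Φ x‖ := integral_const_mul _ _

theorem tendsto_integral_flowMap_sub (hf : IntegrableOn f (Ico 0 1)) :
    Tendsto (fun t => ∫ s in Ico (0 : ℝ) 1, ∑ i, ‖flowMap B t f s i - f s i‖)
      (𝓝[>] 0) (𝓝 0) := by
  refine squeeze_zero' (.of_forall fun t => integral_nonneg fun s => by positivity)
    (eventually_of_mem (Ioo_mem_nhdsGT zero_lt_one) fun t => integral_flowMap_sub_le B f hf) ?_
  simpa using ((tendsto_integral_norm_comp_add_sub (integrable_flowProfile B f hf)).const_mul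
    (m : ℝ)).mono_left nhdsWithin_le_nhds

end

/-- For a finite directed graph with all velocities `1` and `B` its
transposed line-graph adjacency matrix, the family `(T(t)f)(s) = B^⌊t+s⌋ f(s+t−⌊t+s⌋)`
is a C₀-semigroup on `L¹([0,1], ℂ^m)`: `T(0) = Id`, `T(t)T(r) = T(t+r)` for `t, r ≥ 0`,
and `T(t)f → f` in `L¹` as `t ↓ 0`. -/
theorem flow_semigroup
    {m : ℕ} (B : Matrix (Fin m) (Fin m) ℂ) (f : ℝ → Fin m → ℂ)
    (hmeas : ∀ i, Measurable fun s => f s i)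
    (hint : ∀ i, IntegrableOn (fun s => ‖f s i‖) (Set.Ico (0 : ℝ) 1)) :
    (∀ s ∈ Set.Ico (0 : ℝ) 1, flowMap B 0 f s = f s) ∧
    (∀ t r : ℝ, 0 ≤ t → 0 ≤ r → ∀ s ∈ Set.Ico (0 : ℝ) 1,
      flowMap B t (flowMap B r f) s = flowMap B (t + r) f s) ∧
    Tendsto
      (fun t : ℝ => ∫ s in Set.Ico (0 : ℝ) 1,
        ∑ i, ‖flowMap B t f s i - f s i‖)
      (nhdsWithin 0 (Set.Ioi 0)) (nhds 0) := by
  have hf : IntegrableOn f (Ico 0 1) :=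
    Integrable.of_eval fun i => (integrable_norm_iff (hmeas i).aestronglyMeasurable).1 (hint i)
  exact ⟨fun s hs => flowMap_zero_apply B f hs,
    fun t r _ hr s _ => flowMap_flowMap B f hr t s,
    tendsto_integral_flowMap_sub B f hf⟩
end
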